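/- arXiv:math/0412080 — 4 statements merged into one kernel-verified Lean document; each statement's English description precedes it below -/
import Mathlib

section
/- Let R be a unital Banach algebra, let Q ∈ R commute with A and Z, and assume ‖Z‖ < 1 and all factors I − Q^j Z (implicitly needed) are invertible. Define f(A,Z) := Σ_{k≥0} ∏_{j=1}^k [(I − Q^{k−j})^{−1} (I − A Q^{k−j}) Z] (the type I noncommutative q-binomial series). Then f(A,Z) = ∏_{j=1}^∞ [(I − Z Q^{j−1})^{−1} (I − A Z Q^{j−1})], i.e., the noncommutative q-binomial theorem of type I holds. -/
/-!
Write `c k` for the `k`-th term of the series and `F n = ∑ₖ Q ^ (n * k) * c k`, the series with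
`Z` replaced by `Z * Q ^ n`. Multiplying the recursion `(1 - Q ^ (k + 1)) c (k + 1) =
(1 - A Q ^ k) Z c k` by `Q ^ (n * (k + 1))` and summing over `k` gives the q-difference equation
`(1 - Z Q ^ n) F n = (1 - A Z Q ^ n) F (n + 1)`. Iterating it, `F 0` is the `n`-th partial product
times `F n`, and `F n → c 0 = 1` by dominated convergence because `Q ^ n → 0`.
-/

open Filter Topology

section Algebra

variable {R : Type*} [Ring R]

noncomputable def qBinomialTerm (Q A Z : R) (k : ℕ) : R :=
  ((List.range k).map (fun i =>
    Ring.inverse (1 - Q ^ (k - i)) * (1 - A * Q ^ (k - 1 - i)) * Z)).prod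

theorem qBinomialTerm_zero (Q A Z : R) : qBinomialTerm Q A Z 0 = 1 := rfl

theorem qBinomialTerm_succ (Q A Z : R) (k : ℕ) :
    qBinomialTerm Q A Z (k + 1) =
      Ring.inverse (1 - Q ^ (k + 1)) * (1 - A * Q ^ k) * Z * qBinomialTerm Q A Z k := by
  rw [qBinomialTerm, List.range_succ_eq_map, List.map_cons, List.prod_cons, List.map_map]
  congr 2
  refine List.map_congr_left fun i _ => ?_
  simp only [Function.comp_apply, Nat.succ_sub_succ, Nat.sub_zero, Nat.sub_sub, Nat.add_comm 1]

theorem one_sub_pow_mul_qBinomialTerm_succ {Q : R} (A Z : R) {k : ℕ}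
    (hu : IsUnit (1 - Q ^ (k + 1))) :
    (1 - Q ^ (k + 1)) * qBinomialTerm Q A Z (k + 1) =
      (1 - A * Q ^ k) * Z * qBinomialTerm Q A Z k := by
  rw [qBinomialTerm_succ, mul_assoc, mul_assoc, Ring.mul_inverse_cancel_left _ _ hu, mul_assoc]

theorem pow_mul_sub_pow_mul_succ {Q A Z : R} {c : ℕ → R} (hQA : Commute Q A)
    (hQZ : Commute Q Z) (hc : ∀ k, (1 - Q ^ (k + 1)) * c (k + 1) = (1 - A * Q ^ k) * Z * c k)
    (n k : ℕ) :
    Q ^ (n * (k + 1)) * c (k + 1) - Q ^ ((n + 1) * (k + 1)) * c (k + 1) =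
      Z * Q ^ n * (Q ^ (n * k) * c k) - A * Z * Q ^ n * (Q ^ ((n + 1) * k) * c k) := by
  have hcomm : Commute (Q ^ (n * (k + 1))) ((1 - A * Q ^ k) * Z) :=
    ((Commute.one_right _).sub_right ((hQA.pow_left _).mul_right
      (Commute.pow_pow_self Q _ k))).mul_right (hQZ.pow_left _)
  have h₁ : Q ^ n * Q ^ (n * k) = Q ^ (n * (k + 1)) := by rw [← pow_add]; ring_nf
  have h₂ : Q ^ n * Q ^ ((n + 1) * k) = Q ^ k * Q ^ (n * (k + 1)) := by
    rw [← pow_add, ← pow_add]; ring_nf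
  calc Q ^ (n * (k + 1)) * c (k + 1) - Q ^ ((n + 1) * (k + 1)) * c (k + 1)
      = Q ^ (n * (k + 1)) * ((1 - Q ^ (k + 1)) * c (k + 1)) := by
        rw [add_one_mul n, pow_add]
        simp only [mul_sub, sub_mul, one_mul, mul_assoc]
    _ = (1 - A * Q ^ k) * Z * (Q ^ (n * (k + 1)) * c k) := by
        rw [hc, ← mul_assoc, hcomm.eq, mul_assoc]
    _ = _ := by
        rw [mul_assoc Z, mul_assoc (A * Z), ← mul_assoc (Q ^ n), ← mul_assoc (Q ^ n), h₁, h₂,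
          sub_mul, one_mul, mul_assoc A, (hQZ.pow_left k).eq]
        simp only [sub_mul, mul_assoc]

end Algebra

section TopologicalRing

variable {R : Type*} [Ring R] [TopologicalSpace R] [IsTopologicalRing R] [T2Space R]

theorem one_sub_mul_eq_of_hasSum_pow_mul {Q A Z : R} {c : ℕ → R} (hQA : Commute Q A)
    (hQZ : Commute Q Z) (hc : ∀ k, (1 - Q ^ (k + 1)) * c (k + 1) = (1 - A * Q ^ k) * Z * c k)
    {n : ℕ} {F F' : R} (hF : HasSum (fun k => Q ^ (n * k) * c k) F)
    (hF' : HasSum (fun k => Q ^ ((n + 1) * k) * c k) F') :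
    (1 - Z * Q ^ n) * F = (1 - A * Z * Q ^ n) * F' := by
  have hdiff := (hasSum_nat_add_iff' 1).mpr (hF.sub hF')
  simp only [Finset.sum_range_one, mul_zero, pow_zero, sub_self, sub_zero,
    pow_mul_sub_pow_mul_succ hQA hQZ hc] at hdiff
  have h := hdiff.unique ((hF.mul_left (Z * Q ^ n)).sub (hF'.mul_left (A * Z * Q ^ n)))
  rw [sub_mul, sub_mul, one_mul, one_mul, sub_eq_sub_iff_sub_eq_sub, h]

end TopologicalRing

theorem eq_prod_map_range_inverse_mul {M : Type*} [MonoidWithZero M] {u v F : ℕ → M}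
    (hu : ∀ n, IsUnit (u n)) (h : ∀ n, u n * F n = v n * F (n + 1)) (n : ℕ) :
    F 0 = ((List.range n).map (fun j => Ring.inverse (u j) * v j)).prod * F n := by
  induction n with
  | zero => simp
  | succ n ih =>
    rw [ih, List.range_succ, List.map_append, List.prod_append, List.map_singleton,
      List.prod_singleton, mul_assoc, mul_assoc, ← h, Ring.inverse_mul_cancel_left _ _ (hu n)]

section Normed

variable {R : Type*} [NormedRing R]

theorem summable_norm_of_succ_eq_mul {c a : ℕ → R} {a₀ : R} (hc : ∀ k, c (k + 1) = a k * c k)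
    (ha : Tendsto a atTop (𝓝 a₀)) (ha₀ : ‖a₀‖ < 1) : Summable (‖c ·‖) := by
  obtain ⟨r, hr₀, hr₁⟩ := exists_between ha₀
  refine summable_of_ratio_norm_eventually_le hr₁ ?_
  filter_upwards [ha.norm.eventually_le_const hr₀] with k hk
  rw [norm_norm, norm_norm, hc]
  exact (norm_mul_le _ _).trans (mul_le_mul_of_nonneg_right hk (norm_nonneg _))

theorem norm_pow_mul_le {Q : R} (hQ : ‖Q‖ ≤ 1) (m : ℕ) (x : R) : ‖Q ^ m * x‖ ≤ ‖x‖ := by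
  rcases Nat.eq_zero_or_pos m with rfl | hm
  · rw [pow_zero, one_mul]
  · calc ‖Q ^ m * x‖ ≤ ‖Q‖ ^ m * ‖x‖ :=
          (norm_mul_le _ _).trans (mul_le_mul_of_nonneg_right (norm_pow_le' Q hm) (norm_nonneg _))
      _ ≤ ‖x‖ := mul_le_of_le_one_left (norm_nonneg _) (pow_le_one₀ (norm_nonneg _) hQ)

theorem tendsto_ringInverse_one_sub [HasSummableGeomSeries R] {α : Type*} {l : Filter α}
    {u : α → R} (hu : Tendsto u l (𝓝 0)) :
    Tendsto (fun x => Ring.inverse (1 - u x)) l (𝓝 1) := by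
  have hinv : Tendsto Ring.inverse (𝓝 (1 : R)) (𝓝 1) := by
    simpa using (NormedRing.inverse_continuousAt (1 : Rˣ)).tendsto
  exact hinv.comp (by simpa using tendsto_const_nhds.sub hu)

theorem tendsto_qBinomialFactor [HasSummableGeomSeries R] {Q : R} (A Z : R) (hQ : ‖Q‖ < 1) :
    Tendsto (fun k => Ring.inverse (1 - Q ^ (k + 1)) * (1 - A * Q ^ k) * Z) atTop (𝓝 Z) := by
  have hpow := tendsto_pow_atTop_nhds_zero_of_norm_lt_one hQ
  have h₁ := tendsto_ringInverse_one_sub ((tendsto_add_atTop_iff_nat 1).mpr hpow)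
  have h₂ : Tendsto (fun k => 1 - A * Q ^ k) atTop (𝓝 1) := by
    simpa using tendsto_const_nhds.sub (hpow.const_mul A)
  simpa using (h₁.mul h₂).mul_const Z

theorem summable_norm_qBinomialTerm [HasSummableGeomSeries R] {Q : R} (A : R) {Z : R}
    (hQ : ‖Q‖ < 1) (hZ : ‖Z‖ < 1) : Summable (‖qBinomialTerm Q A Z ·‖) :=
  summable_norm_of_succ_eq_mul (qBinomialTerm_succ Q A Z) (tendsto_qBinomialFactor A Z hQ) hZ

variable [CompleteSpace R]

theorem summable_pow_mul {Q : R} {c : ℕ → R} (hQ : ‖Q‖ ≤ 1) (hc : Summable (‖c ·‖))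
    (m : ℕ → ℕ) :
    Summable (fun k => Q ^ m k * c k) :=
  hc.of_norm_bounded fun _ => norm_pow_mul_le hQ _ _

theorem tendsto_tsum_pow_mul {Q : R} {c : ℕ → R} (hQ : ‖Q‖ < 1) (hc : Summable (‖c ·‖)) :
    Tendsto (fun n => ∑' k, Q ^ (n * k) * c k) atTop (𝓝 (c 0)) := by
  have hlim : ∀ k, Tendsto (fun n => Q ^ (n * k) * c k) atTop
      (𝓝 (if k = 0 then c k else 0)) := by
    intro k
    cases k with
    | zero => simp
    | succ k =>
      have hQk : ‖Q ^ (k + 1)‖ < 1 :=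
        (norm_pow_le' Q k.succ_pos).trans_lt (pow_lt_one₀ (norm_nonneg _) hQ k.succ_ne_zero)
      simpa [pow_mul'] using
        (tendsto_pow_atTop_nhds_zero_of_norm_lt_one hQk).mul_const (c (k + 1))
  simpa using tendsto_tsum_of_dominated_convergence hc hlim
    (Eventually.of_forall fun n k => norm_pow_mul_le hQ.le _ _)

end Normed

theorem nc_q_binomial_typeI_general {R : Type*} [NormedRing R]
    [CompleteSpace R] (Q A Z : R)
    (hQA : Q * A = A * Q) (hQZ : Q * Z = Z * Q)
    (hQ : ‖Q‖ < 1) (hZ : ‖Z‖ < 1)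
    (hu1 : ∀ j : ℕ, IsUnit (1 - Q ^ (j + 1)))
    (hu2 : ∀ j : ℕ, IsUnit (1 - Z * Q ^ j))
    (P : R)
    (hP : Tendsto (fun n : ℕ => ((List.range n).map (fun j =>
        Ring.inverse (1 - Z * Q ^ j) * (1 - A * Z * Q ^ j))).prod) atTop (nhds P)) :
    HasSum (fun k : ℕ => ((List.range k).map (fun i =>
        Ring.inverse (1 - Q ^ (k - i)) * (1 - A * Q ^ (k - 1 - i)) * Z)).prod) P := by
  have hc := summable_norm_qBinomialTerm A hQ hZ
  set F : ℕ → R := fun n => ∑' k, Q ^ (n * k) * qBinomialTerm Q A Z k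
  have hF (n : ℕ) : HasSum (fun k => Q ^ (n * k) * qBinomialTerm Q A Z k) (F n) :=
    (summable_pow_mul hQ.le hc _).hasSum
  have hshift (n : ℕ) : (1 - Z * Q ^ n) * F n = (1 - A * Z * Q ^ n) * F (n + 1) :=
    one_sub_mul_eq_of_hasSum_pow_mul hQA hQZ
      (fun k => one_sub_pow_mul_qBinomialTerm_succ A Z (hu1 k)) (hF n) (hF (n + 1))
  have hF₀ : F 0 = P := by
    have h := hP.mul (tendsto_tsum_pow_mul hQ hc)
    rw [qBinomialTerm_zero, mul_one, ← funext (eq_prod_map_range_inverse_mul hu2 hshift)] at h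
    exact tendsto_nhds_unique tendsto_const_nhds h
  have h := hF 0
  simp only [zero_mul, pow_zero, one_mul, hF₀] at h
  exact h

/-- the noncommutative q-binomial theorem of type I:
`Σ_{k≥0} ∏_{j=1}^k (I - Q^{k-j+1})⁻¹ (I - A Q^{k-j}) Z = ∏_{j=1}^∞ (I - Z Q^{j-1})⁻¹ (I - A Z Q^{j-1})`,
the infinite product being the limit of its partial products. -/
theorem nc_q_binomial_typeI {R : Type*} [NormedRing R] [NormedAlgebra ℂ R]
    [CompleteSpace R] (Q A Z : R)
    (hQA : Q * A = A * Q) (hQZ : Q * Z = Z * Q)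
    (hQ : ‖Q‖ < 1) (hZ : ‖Z‖ < 1)
    (hu1 : ∀ j : ℕ, IsUnit (1 - Q ^ (j + 1)))
    (hu2 : ∀ j : ℕ, IsUnit (1 - Z * Q ^ j))
    (P : R)
    (hP : Tendsto (fun n : ℕ => ((List.range n).map (fun j =>
        Ring.inverse (1 - Z * Q ^ j) * (1 - A * Z * Q ^ j))).prod) atTop (nhds P)) :
    HasSum (fun k : ℕ => ((List.range k).map (fun i =>
        Ring.inverse (1 - Q ^ (k - i)) * (1 - A * Q ^ (k - 1 - i)) * Z)).prod) P :=
  nc_q_binomial_typeI_general Q A Z hQA hQZ hQ hZ hu1 hu2 P hP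
end

section
/- Let f(A,B,Z) := Σ_{k∈ℤ} ⌈A; B; Q, Z⌋_k be the noncommutative bilateral basic hypergeometric series of type I, where ⌈A; B; Q, Z⌋_k = ∏_{j=1}^k [(I − B Q^{k−j})^{−1}(I − A Q^{k−j}) Z] with the bilateral product convention for negative k. Under the convergence assumptions ‖Z‖ < 1 and ‖Z^{−1} A^{−1} B‖ < 1 (Q commuting with all parameters), f satisfies the shift relation f(A,B,Z) = f(AQ, BQ, Z) · (I − B)^{−1}(I − A) Z. -/
open Filter

/-- Integer powers of `Q`, with negative powers given by powers of `Ring.inverse Q`. -/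
noncomputable def zpowR {R : Type*} [Ring R] (Q : R) (m : ℤ) : R :=
  if 0 ≤ m then Q ^ m.toNat else (Ring.inverse Q) ^ (-m).toNat

/-- The bilateral ordered product `∏_{j=1}^k X j`: for `k ≥ 0` it is
`X 1 * X 2 * ⋯ * X k` (left to right), and for `k < 0` it is
`(X 0)⁻¹ * (X (-1))⁻¹ * ⋯ * (X (k+1))⁻¹`, following the inverse-reversed convention. -/
noncomputable def bprod {R : Type*} [Ring R] (X : ℤ → R) (k : ℤ) : R :=
  if 0 ≤ k then ((List.range k.toNat).map (fun i => X ((i : ℤ) + 1))).prod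
  else ((List.range (-k).toNat).map (fun i => Ring.inverse (X (-(i : ℤ))))).prod

/-- The `k`-th term `⌈A; B; Q, Z⌋_k` of the noncommutative bilateral basic hypergeometric
series of type I: `∏_{j=1}^k (I - B Q^{k-j})⁻¹ (I - A Q^{k-j}) Z`. -/
noncomputable def termI {R : Type*} [Ring R] (Q A B Z : R) (k : ℤ) : R :=
  bprod (fun j => Ring.inverse (1 - B * zpowR Q (k - j)) * (1 - A * zpowR Q (k - j)) * Z) k

/-- The `k`-th term `⌊A; B; Q, Z⌉_k` of the noncommutative bilateral basic hypergeometric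
series of type II: `∏_{j=1}^k (I - B Q^{j-1})⁻¹ (I - A Q^{j-1}) Z`. -/
noncomputable def termII {R : Type*} [Ring R] (Q A B Z : R) (k : ℤ) : R :=
  bprod (fun j => Ring.inverse (1 - B * zpowR Q (j - 1)) * (1 - A * zpowR Q (j - 1)) * Z) k

/-!
Peeling off the last factor `j = k` of `⌈A; B; Q, Z⌋_k` leaves `(I - B)⁻¹ (I - A) Z`, and since
`A Q^{k-j} = (A Q) Q^{(k-1)-j}` the remaining factors are exactly those of `⌈AQ; BQ; Q, Z⌋_{k-1}`.
With the inverse-reversed convention for negative `k` this peeling is valid for every `k ∈ ℤ`, as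
long as the peeled factor is invertible. Reindexing the bilateral sum by `k ↦ k - 1` then gives the
shift relation.
-/

section zpowR

variable {R : Type*} [Ring R] {Q : R}

@[simp]
lemma zpowR_zero (Q : R) : zpowR Q 0 = 1 := by
  simp [zpowR]

lemma zpowR_eq_units_zpow (hQ : IsUnit Q) (m : ℤ) : zpowR Q m = ↑(hQ.unit ^ m) := by
  have hinv : Ring.inverse Q = ↑hQ.unit⁻¹ := by
    conv_lhs => rw [← hQ.unit_spec]
    exact Ring.inverse_unit hQ.unit
  unfold zpowR
  split_ifs with hm
  · obtain ⟨n, rfl⟩ := Int.eq_ofNat_of_zero_le hm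
    simp
  · obtain ⟨n, rfl⟩ := Int.exists_eq_neg_ofNat (by omega : m ≤ 0)
    simp [hinv]

lemma mul_self_zpowR (hQ : IsUnit Q) (m : ℤ) : Q * zpowR Q m = zpowR Q (m + 1) := by
  rw [zpowR_eq_units_zpow hQ, zpowR_eq_units_zpow hQ, ← mul_self_zpow, Units.val_mul,
    hQ.unit_spec]

end zpowR

section bprod

variable {R : Type*} [Ring R] (X : ℤ → R) {k : ℤ}

lemma bprod_of_nonneg (hk : 0 ≤ k) :
    bprod X k = ((List.range k.toNat).map fun i : ℕ => X (i + 1)).prod := by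
  rw [bprod, if_pos hk]
  -- the coercion `List ℕ → List ℤ` in `bprod` is elaborated as a monadic lift
  simp only [bind_pure_comp, List.map_eq_map, List.map_map]
  rfl

lemma bprod_of_nonpos (hk : k ≤ 0) :
    bprod X k = ((List.range (-k).toNat).map fun i : ℕ => Ring.inverse (X (-i))).prod := by
  rcases hk.lt_or_eq with hk | rfl
  · rw [bprod, if_neg (by omega)]
    simp only [bind_pure_comp, List.map_eq_map, List.map_map]
    rfl
  · simp [bprod]

lemma bprod_sub_one_mul (h : IsUnit (X k)) : bprod X (k - 1) * X k = bprod X k := by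
  rcases le_or_gt 1 k with hk | hk
  · rw [bprod_of_nonneg X (by omega : 0 ≤ k), bprod_of_nonneg X (by omega : 0 ≤ k - 1),
      show k.toNat = (k - 1).toNat + 1 by omega, List.range_succ]
    simp only [List.map_append, List.prod_append, List.map_cons, List.map_nil,
      List.prod_cons, List.prod_nil, mul_one]
    congr 2
    omega
  · rw [bprod_of_nonpos X (by omega : k ≤ 0), bprod_of_nonpos X (by omega : k - 1 ≤ 0),
      show (-(k - 1)).toNat = (-k).toNat + 1 by omega, List.range_succ]
    simp only [List.map_append, List.prod_append, List.map_cons, List.map_nil,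
      List.prod_cons, List.prod_nil, mul_one]
    rw [show -((-k).toNat : ℤ) = k by omega, mul_assoc, Ring.inverse_mul_cancel _ h, mul_one]

end bprod

lemma termI_sub_one_mul {R : Type*} [Ring R] {Q A B Z : R} (hQ : IsUnit Q)
    (hB : IsUnit (1 - B)) (hA : IsUnit (1 - A)) (hZ : IsUnit Z) (k : ℤ) :
    termI Q (A * Q) (B * Q) Z (k - 1) * (Ring.inverse (1 - B) * ((1 - A) * Z))
      = termI Q A B Z k := by
  set X : ℤ → R := fun j =>
    Ring.inverse (1 - B * zpowR Q (k - j)) * (1 - A * zpowR Q (k - j)) * Z with hX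
  have h_shifted : termI Q (A * Q) (B * Q) Z (k - 1) = bprod X (k - 1) := by
    have h_absorb (C : R) (j : ℤ) : C * Q * zpowR Q (k - 1 - j) = C * zpowR Q (k - j) := by
      rw [mul_assoc, mul_self_zpowR hQ]
      ring_nf
    simp only [termI, hX, h_absorb]
  have h_last : X k = Ring.inverse (1 - B) * ((1 - A) * Z) := by
    simp [hX, mul_assoc]
  have h_unit : IsUnit (X k) := by
    rw [h_last]
    exact (isUnit_ringInverse.mpr hB).mul (hA.mul hZ)
  rw [h_shifted, ← h_last]
  exact bprod_sub_one_mul X h_unit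

theorem bilateral_typeI_shift_general {R : Type*} [NormedRing R] (Q A B Z : R)
    (hZu : IsUnit Z) (hQu : IsUnit Q)
    (huB : ∀ m : ℤ, IsUnit (1 - B * zpowR Q m))
    (huA : ∀ m : ℤ, IsUnit (1 - A * zpowR Q m))
    (hs2 : Summable (fun k : ℤ => termI Q (A * Q) (B * Q) Z k)) :
    (∑' k : ℤ, termI Q A B Z k)
      = (∑' k : ℤ, termI Q (A * Q) (B * Q) Z k)
        * (Ring.inverse (1 - B) * ((1 - A) * Z)) := by
  have hB : IsUnit (1 - B) := by simpa using huB 0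
  have hA : IsUnit (1 - A) := by simpa using huA 0
  set C := Ring.inverse (1 - B) * ((1 - A) * Z)
  set g := termI Q (A * Q) (B * Q) Z
  calc (∑' k : ℤ, termI Q A B Z k)
      = ∑' k : ℤ, g (k - 1) * C := tsum_congr fun k => (termI_sub_one_mul hQu hB hA hZu k).symm
    _ = (∑' k : ℤ, g (k - 1)) * C := ((Equiv.subRight 1).summable_iff.mpr hs2).tsum_mul_right C
    _ = (∑' k : ℤ, g k) * C := congrArg (· * C) ((Equiv.subRight 1).tsum_eq g)

/-- the shift relation `f(A,B,Z) = f(AQ,BQ,Z) (I-B)⁻¹ (I-A) Z` for the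
type I noncommutative bilateral basic hypergeometric series. -/
theorem bilateral_typeI_shift {R : Type*} [NormedRing R] [NormedAlgebra ℂ R]
    [CompleteSpace R] (Q A B Z : R)
    (hQA : Q * A = A * Q) (hQB : Q * B = B * Q) (hQZ : Q * Z = Z * Q)
    (hAu : IsUnit A) (hZu : IsUnit Z) (hQu : IsUnit Q)
    (huB : ∀ m : ℤ, IsUnit (1 - B * zpowR Q m))
    (huA : ∀ m : ℤ, IsUnit (1 - A * zpowR Q m))
    (hQ : ‖Q‖ < 1) (hZ : ‖Z‖ < 1)
    (hZAB : ‖Ring.inverse Z * Ring.inverse A * B‖ < 1)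
    (hs1 : Summable (fun k : ℤ => termI Q A B Z k))
    (hs2 : Summable (fun k : ℤ => termI Q (A * Q) (B * Q) Z k)) :
    (∑' k : ℤ, termI Q A B Z k)
      = (∑' k : ℤ, termI Q (A * Q) (B * Q) Z k)
        * (Ring.inverse (1 - B) * ((1 - A) * Z)) :=
  bilateral_typeI_shift_general Q A B Z hZu hQu huB huA hs2
end

section
/- Let f(A,B,Z) be the type I noncommutative bilateral basic hypergeometric series Σ_{k∈ℤ} ∏_{j=1}^k (I−BQ^{k−j})^{−1}(I−AQ^{k−j})Z, where B and Q commute with all other parameters. Then the three functional equations (i) f(A,B,Z) = f(AQ,BQ,Z)(I−B)^{−1}(I−A)Z, (ii) Z f(A,B,Z) = AZ f(A,B,ZQ) + f(AQ,B,Z)(I−A)Z, (iii) f(A,BQ,Z) = B f(A,BQ,ZQ) + (I−B) f(A,B,Z) together imply the contiguous relation (I − B Z^{−1} A^{−1} Z) f(A,BQ,Z) = (I − B)(I − B Z^{−1} A^{−1}) f(A,B,Z). -/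
open Filter

/-- If `a` commutes with `b`, it commutes with `Ring.inverse b`. -/
lemma commute_ringInverse {M₀ : Type*} [MonoidWithZero M₀] {a b : M₀}
    (h : Commute a b) : Commute a (Ring.inverse b) := by
  by_cases hb : IsUnit b
  · obtain ⟨u, rfl⟩ := hb
    rw [Ring.inverse_unit]
    exact h.units_inv_right
  · rw [Ring.inverse_non_unit _ hb]
    exact Commute.zero_right a

lemma commute_zpowR {R : Type*} [Ring R] {a Q : R} (h : Commute a Q) (m : ℤ) :
    Commute a (zpowR Q m) := by
  unfold zpowR
  split
  · exact h.pow_right _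
  · exact (commute_ringInverse h).pow_right _

lemma commute_bprod {R : Type*} [Ring R] {a : R} {X : ℤ → R}
    (h : ∀ j, Commute a (X j)) (k : ℤ) : Commute a (bprod X k) := by
  unfold bprod
  split
  · refine Commute.list_prod_right _ _ ?_
    intro x hx
    simp only [List.mem_map] at hx
    obtain ⟨i, -, rfl⟩ := hx
    exact h _
  · refine Commute.list_prod_right _ _ ?_
    intro x hx
    simp only [List.mem_map] at hx
    obtain ⟨i, -, rfl⟩ := hx
    exact commute_ringInverse (h _)

lemma commute_termI {R : Type*} [Ring R] {Q A B Z C : R}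
    (hCQ : Commute C Q) (hCA : Commute C A) (hCB : Commute C B) (hCZ : Commute C Z)
    (k : ℤ) : Commute C (termI Q A B Z k) := by
  refine commute_bprod (fun j => ?_) k
  have hz := commute_zpowR hCQ (k - j)
  exact ((commute_ringInverse ((Commute.one_right C).sub_right (hCB.mul_right hz))).mul_right
    ((Commute.one_right C).sub_right (hCA.mul_right hz))).mul_right hCZ

/-- the three functional equations (i), (ii) (with `B ↦ BQ`), (iii) for the
type I noncommutative bilateral series imply the contiguous relation
`(I - B Z⁻¹ A⁻¹ Z) f(A,BQ,Z) = (I - B)(I - B Z⁻¹ A⁻¹) f(A,B,Z)`. -/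
theorem bilateral_typeI_contiguous {R : Type*} [NormedRing R] [NormedAlgebra ℂ R]
    [CompleteSpace R] (Q A B Z : R)
    (hQA : Q * A = A * Q) (hQB : Q * B = B * Q) (hQZ : Q * Z = Z * Q)
    (hBA : B * A = A * B) (hBZ : B * Z = Z * B)
    (hAu : IsUnit A) (hZu : IsUnit Z) (hQu : IsUnit Q)
    (huB : ∀ m : ℤ, IsUnit (1 - B * zpowR Q m))
    (huA : ∀ m : ℤ, IsUnit (1 - A * zpowR Q m))
    (hQ : ‖Q‖ < 1) (hZ : ‖Z‖ < 1)
    (hBZA : ‖B * Ring.inverse Z * Ring.inverse A‖ < 1)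
    -- (i): f(A,B,Z) = f(AQ,BQ,Z) (I-B)⁻¹ (I-A) Z
    (hi : (∑' k : ℤ, termI Q A B Z k)
        = (∑' k : ℤ, termI Q (A * Q) (B * Q) Z k)
          * (Ring.inverse (1 - B) * ((1 - A) * Z)))
    -- (ii) at lower parameter BQ: Z f(A,BQ,Z) = A Z f(A,BQ,ZQ) + f(AQ,BQ,Z)(I-A)Z
    (hii : Z * (∑' k : ℤ, termI Q A (B * Q) Z k)
        = A * Z * (∑' k : ℤ, termI Q A (B * Q) (Z * Q) k)
          + (∑' k : ℤ, termI Q (A * Q) (B * Q) Z k) * ((1 - A) * Z))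
    -- (iii): f(A,BQ,Z) = B f(A,BQ,ZQ) + (I-B) f(A,B,Z)
    (hiii : (∑' k : ℤ, termI Q A (B * Q) Z k)
        = B * (∑' k : ℤ, termI Q A (B * Q) (Z * Q) k)
          + (1 - B) * (∑' k : ℤ, termI Q A B Z k)) :
    (1 - B * Ring.inverse Z * Ring.inverse A * Z) * (∑' k : ℤ, termI Q A (B * Q) Z k)
      = (1 - B) * ((1 - B * Ring.inverse Z * Ring.inverse A)
          * (∑' k : ℤ, termI Q A B Z k)) := by
  set f := ∑' k : ℤ, termI Q A B Z k with hff
  set g := ∑' k : ℤ, termI Q A (B * Q) Z k with hgg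
  set p := ∑' k : ℤ, termI Q A (B * Q) (Z * Q) k with hpp
  set F := ∑' k : ℤ, termI Q (A * Q) (B * Q) Z k with hFF
  set iA := Ring.inverse A with hiA
  set iZ := Ring.inverse Z with hiZ
  -- basic commutation facts
  have cBA : Commute B A := hBA
  have cBZ : Commute B Z := hBZ
  have cBQ : Commute B Q := hQB.symm
  have cBAZ : Commute B (A * Z) := cBA.mul_right cBZ
  have hB1 : IsUnit (1 - B) := by simpa [zpowR] using huB 0
  have cBf : Commute B f :=
    Commute.tsum_right _ fun k => commute_termI cBQ cBA (Commute.refl B) cBZ k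
  have hZiZ : Z * iZ = 1 := Ring.mul_inverse_cancel Z hZu
  have hAiA : A * iA = 1 := Ring.mul_inverse_cancel A hAu
  -- c1 : A Z (B Z⁻¹ A⁻¹) = B
  have c1 : A * Z * (B * iZ * iA) = B := by
    calc A * Z * (B * iZ * iA) = (A * Z) * B * (iZ * iA) := by noncomm_ring
      _ = B * (A * Z) * (iZ * iA) := by rw [← cBAZ.eq]
      _ = B * (A * (Z * iZ) * iA) := by noncomm_ring
      _ = B := by rw [hZiZ, mul_one, hAiA, mul_one]
  -- e1 : f (1-B) = F (1-A) Z
  have cB1AZ : Commute (1 - B) ((1 - A) * Z) :=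
    ((Commute.one_left _).sub_left
      (((Commute.one_right B).sub_right cBA).mul_right cBZ))
  have cInv : Commute ((1 - A) * Z) (Ring.inverse (1 - B)) :=
    commute_ringInverse cB1AZ.symm
  have e1 : f * (1 - B) = F * ((1 - A) * Z) := by
    rw [hi, ← cInv.eq]
    calc F * ((1 - A) * Z * Ring.inverse (1 - B)) * (1 - B)
        = F * ((1 - A) * Z) * (Ring.inverse (1 - B) * (1 - B)) := by noncomm_ring
      _ = F * ((1 - A) * Z) := by rw [Ring.inverse_mul_cancel _ hB1, mul_one]
  -- e2 : A Z p = Z g - f (1-B)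
  have e2 : A * Z * p = Z * g - f * (1 - B) := by
    rw [hii, e1]; abel
  -- e3
  have e3 : A * Z * g = B * (Z * g) - B * (f * (1 - B)) + A * Z * ((1 - B) * f) := by
    have sw : A * Z * (B * p) = B * (A * Z * p) := by
      calc A * Z * (B * p) = (A * Z) * B * p := by noncomm_ring
        _ = B * (A * Z) * p := by rw [← cBAZ.eq]
        _ = B * (A * Z * p) := by noncomm_ring
    calc A * Z * g = A * Z * (B * p) + A * Z * ((1 - B) * f) := by rw [hiii]; noncomm_ring
      _ = B * (A * Z * p) + A * Z * ((1 - B) * f) := by rw [sw]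
      _ = B * (Z * g - f * (1 - B)) + A * Z * ((1 - B) * f) := by rw [e2]
      _ = B * (Z * g) - B * (f * (1 - B)) + A * Z * ((1 - B) * f) := by noncomm_ring
  -- commutation of f with 1-B
  have cf : f * (1 - B) = (1 - B) * f := ((Commute.one_right f).sub_right cBf.symm).eq
  -- (A*Z - B) commutes with (1-B)
  have c4 : (A * Z - B) * (1 - B) = (1 - B) * (A * Z - B) :=
    ((Commute.one_right _).sub_right (cBAZ.sub_right (Commute.refl B)).symm).eq
  have c5 : (A * Z) * (1 - B) = (1 - B) * (A * Z) :=
    ((Commute.one_right _).sub_right cBAZ.symm).eq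
  -- the key identity, after multiplying the goal by A Z on the left
  have key : A * Z * ((1 - B * iZ * iA * Z) * g)
      = A * Z * ((1 - B) * ((1 - B * iZ * iA) * f)) := by
    calc A * Z * ((1 - B * iZ * iA * Z) * g)
        = A * Z * g - (A * Z * (B * iZ * iA)) * (Z * g) := by noncomm_ring
      _ = A * Z * g - B * (Z * g) := by rw [c1]
      _ = A * Z * ((1 - B) * f) - B * (f * (1 - B)) := by rw [e3]; abel
      _ = A * Z * ((1 - B) * f) - B * ((1 - B) * f) := by rw [cf]
      _ = (A * Z - B) * ((1 - B) * f) := by noncomm_ring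
      _ = ((A * Z - B) * (1 - B)) * f := by noncomm_ring
      _ = ((1 - B) * (A * Z - B)) * f := by rw [c4]
      _ = (1 - B) * ((A * Z) * f - B * f) := by noncomm_ring
      _ = (1 - B) * ((A * Z) * f - (A * Z * (B * iZ * iA)) * f) := by rw [c1]
      _ = ((1 - B) * (A * Z)) * ((1 - B * iZ * iA) * f) := by noncomm_ring
      _ = ((A * Z) * (1 - B)) * ((1 - B * iZ * iA) * f) := by rw [c5]
      _ = A * Z * ((1 - B) * ((1 - B * iZ * iA) * f)) := by noncomm_ring
  exact (hAu.mul hZu).mul_left_cancel key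
end

section
/- Index-reversal identity for type I bilateral factorials: for any integer k ≥ 0, ⌈A; B; Q, Z⌋_{−k} = Z^{−1} A^{−1} · ⌈B^{−1}Q; A^{−1}Q; Q, B Z^{−1} A^{−1}⌋_k · A Z, where ⌈A;B;Q,Z⌋_k = ∏_{j=1}^k (I − B Q^{k−j})^{−1}(I − A Q^{k−j}) Z and Q, B commute with all other parameters. -/
open Filter

section auxiliary

variable {R : Type*} [Ring R]

lemma inv_unique' {x y : R} (h1 : x * y = 1) (h2 : y * x = 1) : Ring.inverse x = y := by
  have hx : IsUnit x := ⟨⟨x, y, h1, h2⟩, rfl⟩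
  calc Ring.inverse x = Ring.inverse x * (x * y) := by rw [h1, mul_one]
    _ = (Ring.inverse x * x) * y := by rw [mul_assoc]
    _ = y := by rw [Ring.inverse_mul_cancel x hx, one_mul]

lemma cancel_left {x : R} (h : IsUnit x) (a : R) : x * (Ring.inverse x * a) = a := by
  rw [← mul_assoc, Ring.mul_inverse_cancel x h, one_mul]

lemma cancel_left' {x : R} (h : IsUnit x) (a : R) : Ring.inverse x * (x * a) = a := by
  rw [← mul_assoc, Ring.inverse_mul_cancel x h, one_mul]

lemma isUnit_inv {a : R} (h : IsUnit a) : IsUnit (Ring.inverse a) :=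
  ⟨⟨Ring.inverse a, a, Ring.inverse_mul_cancel a h, Ring.mul_inverse_cancel a h⟩, rfl⟩

lemma comm_inv {a b : R} (hb : IsUnit b) (h : a * b = b * a) :
    a * Ring.inverse b = Ring.inverse b * a := by
  calc a * Ring.inverse b
      = Ring.inverse b * (b * (a * Ring.inverse b)) := (cancel_left' hb _).symm
    _ = Ring.inverse b * (a * (b * Ring.inverse b)) := by
        rw [← mul_assoc b a, ← h, mul_assoc]
    _ = Ring.inverse b * a := by rw [Ring.mul_inverse_cancel b hb, mul_one]

lemma intertwine (c : R) (f g : ℕ → R) :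
    ∀ k : ℕ, (∀ i, i < k → c * f i = g i * c) →
      c * ((List.range k).map f).prod = ((List.range k).map g).prod * c := by
  intro k
  induction k with
  | zero => intro _; simp
  | succ n ih =>
    intro h
    rw [List.range_succ, List.map_append, List.map_append, List.prod_append, List.prod_append]
    simp only [List.map_cons, List.map_nil, List.prod_cons, List.prod_nil, mul_one]
    rw [← mul_assoc, ih (fun i hi => h i (Nat.lt_succ_of_lt hi)), mul_assoc,
      h n (Nat.lt_succ_self n), ← mul_assoc]

lemma termI_zero (Q A B Z : R) : termI Q A B Z 0 = 1 := by
  unfold termI bprod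
  rw [if_pos le_rfl]
  simp

lemma range_cast_list (k : ℕ) :
    (do let a ← List.range k; pure ((a : ℤ))) = (List.range k).map (fun a : ℕ => (a : ℤ)) := by
  induction (List.range k) with
  | nil => rfl
  | cons a l ih =>
    simp only [List.flatMap_cons, List.map_cons, List.singleton_append]
    exact congrArg _ ih

lemma factor_id (A B Z q q' : R)
    (hAu : IsUnit A) (hBu : IsUnit B) (hZu : IsUnit Z)
    (hA' : IsUnit (1 - A * q')) (hB' : IsUnit (1 - B * q'))
    (hqq' : q * q' = 1) (hq'q : q' * q = 1)
    (hAq : A * q = q * A) (hAq' : A * q' = q' * A)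
    (hBq : B * q = q * B) (hBq' : B * q' = q' * B) :
    (A * Z) * Ring.inverse (Ring.inverse (1 - B * q') * (1 - A * q') * Z)
      = (Ring.inverse (1 - Ring.inverse A * q) * (1 - Ring.inverse B * q)
          * (B * Ring.inverse Z * Ring.inverse A)) * (A * Z) := by
  have hq_aq' : q * (A * q') = A := by
    rw [← mul_assoc, ← hAq, mul_assoc, hqq', mul_one]
  have hq_bq' : q * (B * q') = B := by
    rw [← mul_assoc, ← hBq, mul_assoc, hqq', mul_one]
  have hqU : IsUnit q := ⟨⟨q, q', hqq', hq'q⟩, rfl⟩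
  -- rewrite the big inverse on the left
  have h1 : Ring.inverse (Ring.inverse (1 - B * q') * (1 - A * q') * Z)
      = Ring.inverse Z * Ring.inverse (1 - A * q') * (1 - B * q') := by
    apply inv_unique'
    · simp only [mul_assoc]
      rw [cancel_left hZu, cancel_left hA', Ring.inverse_mul_cancel _ hB']
    · simp only [mul_assoc]
      rw [cancel_left hB', cancel_left' hA', Ring.inverse_mul_cancel Z hZu]
  rw [h1]
  -- the unit 1 - A⁻¹ q
  have eA : (1 : R) - Ring.inverse A * q = -(Ring.inverse A * q * (1 - A * q')) := by
    rw [mul_sub, mul_one, neg_sub, mul_assoc (Ring.inverse A) q, hq_aq',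
      Ring.inverse_mul_cancel A hAu]
  have huIA : IsUnit ((1 : R) - Ring.inverse A * q) := by
    rw [eA]; exact (((isUnit_inv hAu).mul hqU).mul hA').neg
  -- core identity
  have e1 : ((1 : R) - Ring.inverse A * q) * A = A - q := by
    rw [sub_mul, one_mul, mul_assoc, ← hAq, ← mul_assoc, Ring.inverse_mul_cancel A hAu, one_mul]
  have e2 : A - q = (1 - A * q') * (-q) := by
    rw [mul_neg, sub_mul, one_mul, mul_assoc, hq'q, mul_one, neg_sub]
  have hqy : q * (1 - A * q') = (1 - A * q') * q := by
    rw [mul_sub, sub_mul, mul_one, one_mul, hq_aq', mul_assoc, hq'q, mul_one]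
  have e3 : q * Ring.inverse (1 - A * q') = Ring.inverse (1 - A * q') * q :=
    comm_inv hA' hqy
  have e3n : (-q) * Ring.inverse (1 - A * q') = Ring.inverse (1 - A * q') * (-q) := by
    rw [neg_mul, mul_neg, e3]
  have core : ((1 : R) - Ring.inverse A * q)
      * (A * (Ring.inverse (1 - A * q') * (1 - B * q')))
      = ((1 : R) - Ring.inverse B * q) * B := by
    calc ((1 : R) - Ring.inverse A * q) * (A * (Ring.inverse (1 - A * q') * (1 - B * q')))
        = (((1 : R) - Ring.inverse A * q) * A) * (Ring.inverse (1 - A * q') * (1 - B * q')) := by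
          rw [mul_assoc]
      _ = ((1 - A * q') * (-q)) * (Ring.inverse (1 - A * q') * (1 - B * q')) := by
          rw [e1, e2]
      _ = (1 - A * q') * (((-q) * Ring.inverse (1 - A * q')) * (1 - B * q')) := by
          simp only [mul_assoc]
      _ = (1 - A * q') * (Ring.inverse (1 - A * q') * ((-q) * (1 - B * q'))) := by
          rw [e3n, mul_assoc]
      _ = (-q) * (1 - B * q') := cancel_left hA' _
      _ = B - q := by rw [neg_mul, mul_sub, mul_one, hq_bq', neg_sub]
      _ = ((1 : R) - Ring.inverse B * q) * B := by
          rw [sub_mul, one_mul, mul_assoc, ← hBq, ← mul_assoc,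
            Ring.inverse_mul_cancel B hBu, one_mul]
  -- put everything together
  simp only [mul_assoc]
  rw [cancel_left hZu, cancel_left' hAu, Ring.inverse_mul_cancel Z hZu, mul_one]
  calc A * (Ring.inverse (1 - A * q') * (1 - B * q'))
      = Ring.inverse (1 - Ring.inverse A * q) * ((1 - Ring.inverse A * q)
          * (A * (Ring.inverse (1 - A * q') * (1 - B * q')))) := (cancel_left' huIA _).symm
    _ = Ring.inverse (1 - Ring.inverse A * q) * ((1 - Ring.inverse B * q) * B) := by rw [core]

end auxiliary

/-- the index-reversal identity
`⌈A;B;Q,Z⌋_{-k} = Z⁻¹ A⁻¹ ⌈B⁻¹Q; A⁻¹Q; Q, B Z⁻¹ A⁻¹⌋_k A Z` for every natural `k`. -/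
theorem termI_index_reversal {R : Type*} [Ring R] (Q A B Z : R)
    (hQA : Q * A = A * Q) (hQB : Q * B = B * Q) (hQZ : Q * Z = Z * Q)
    (hBA : B * A = A * B) (hBZ : B * Z = Z * B)
    (hAu : IsUnit A) (hBu : IsUnit B) (hZu : IsUnit Z) (hQu : IsUnit Q)
    (huB : ∀ m : ℤ, IsUnit (1 - B * zpowR Q m))
    (huA : ∀ m : ℤ, IsUnit (1 - A * zpowR Q m))
    (k : ℕ) :
    termI Q A B Z (-(k : ℤ))
      = Ring.inverse Z * Ring.inverse A
        * termI Q (Ring.inverse B * Q) (Ring.inverse A * Q) (B * Ring.inverse Z * Ring.inverse A)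
            (k : ℤ)
        * (A * Z) := by
  rcases Nat.eq_zero_or_pos k with hk | hk
  · subst hk
    simp only [Nat.cast_zero, neg_zero, termI_zero, mul_one]
    symm
    rw [mul_assoc, cancel_left' hAu, Ring.inverse_mul_cancel Z hZu]
  · have hneg : ¬ (0 ≤ -(k : ℤ)) := by omega
    have hpos : (0 : ℤ) ≤ (k : ℤ) := by positivity
    have ht1 : ((-(-(k : ℤ))).toNat) = k := by omega
    have ht2 : ((k : ℤ)).toNat = k := by omega
    simp only [termI, bprod, if_neg hneg, if_pos hpos, ht1, ht2]
    simp only [range_cast_list, List.map_map]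
    show ((List.range k).map (fun i : ℕ =>
        Ring.inverse (Ring.inverse (1 - B * zpowR Q (-(k : ℤ) - -(i : ℤ)))
          * (1 - A * zpowR Q (-(k : ℤ) - -(i : ℤ))) * Z))).prod
      = Ring.inverse Z * Ring.inverse A
        * ((List.range k).map (fun i : ℕ =>
            Ring.inverse (1 - Ring.inverse A * Q * zpowR Q ((k : ℤ) - ((i : ℤ) + 1)))
              * (1 - Ring.inverse B * Q * zpowR Q ((k : ℤ) - ((i : ℤ) + 1)))
              * (B * Ring.inverse Z * Ring.inverse A))).prod
        * (A * Z)
    set f : ℕ → R := fun i =>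
      Ring.inverse (Ring.inverse (1 - B * zpowR Q (-(k : ℤ) - -(i : ℤ)))
        * (1 - A * zpowR Q (-(k : ℤ) - -(i : ℤ))) * Z) with hf
    set g : ℕ → R := fun i =>
      Ring.inverse (1 - Ring.inverse A * Q * zpowR Q ((k : ℤ) - ((i : ℤ) + 1)))
        * (1 - Ring.inverse B * Q * zpowR Q ((k : ℤ) - ((i : ℤ) + 1)))
        * (B * Ring.inverse Z * Ring.inverse A) with hg
    have hQinv : Q * Ring.inverse Q = 1 := Ring.mul_inverse_cancel Q hQu
    have hinvQ : Ring.inverse Q * Q = 1 := Ring.inverse_mul_cancel Q hQu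
    have hcommQ : Commute Q (Ring.inverse Q) := by
      show Q * Ring.inverse Q = Ring.inverse Q * Q
      rw [hQinv, hinvQ]
    have key : ∀ i, i < k → (A * Z) * f i = g i * (A * Z) := by
      intro i hi
      have h1 : -(k : ℤ) - -(i : ℤ) = (i : ℤ) - k := by ring
      have hz1 : zpowR Q ((i : ℤ) - k) = (Ring.inverse Q) ^ (k - i) := by
        rw [zpowR, if_neg (by omega)]
        congr 1
        omega
      have hz2 : zpowR Q ((k : ℤ) - ((i : ℤ) + 1)) = Q ^ (k - i - 1) := by
        rw [zpowR, if_pos (by omega)]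
        congr 1
        omega
      have hpow : ∀ C : R, (C * Q) * Q ^ (k - i - 1) = C * Q ^ (k - i) := by
        intro C
        rw [mul_assoc, ← pow_succ']
        congr 2
        omega
      have hfv : f i = Ring.inverse (Ring.inverse (1 - B * (Ring.inverse Q) ^ (k - i))
          * (1 - A * (Ring.inverse Q) ^ (k - i)) * Z) := by
        rw [hf]; simp only [h1, hz1]
      have hgv : g i = Ring.inverse (1 - Ring.inverse A * Q ^ (k - i))
          * (1 - Ring.inverse B * Q ^ (k - i)) * (B * Ring.inverse Z * Ring.inverse A) := by
        rw [hg]; simp only [hz2, hpow]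
      rw [hfv, hgv]
      have hA' : IsUnit (1 - A * (Ring.inverse Q) ^ (k - i)) := by
        have := huA ((i : ℤ) - k); rwa [hz1] at this
      have hB' : IsUnit (1 - B * (Ring.inverse Q) ^ (k - i)) := by
        have := huB ((i : ℤ) - k); rwa [hz1] at this
      have hqq' : Q ^ (k - i) * (Ring.inverse Q) ^ (k - i) = 1 := by
        rw [← Commute.mul_pow hcommQ, hQinv, one_pow]
      have hq'q : (Ring.inverse Q) ^ (k - i) * Q ^ (k - i) = 1 := by
        rw [← Commute.mul_pow hcommQ.symm, hinvQ, one_pow]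
      have hAq : A * Q ^ (k - i) = Q ^ (k - i) * A :=
        (Commute.pow_right (show Commute A Q from hQA.symm) (k - i))
      have hAq' : A * (Ring.inverse Q) ^ (k - i) = (Ring.inverse Q) ^ (k - i) * A :=
        (Commute.pow_right (show Commute A (Ring.inverse Q) from comm_inv hQu hQA.symm) (k - i))
      have hBq : B * Q ^ (k - i) = Q ^ (k - i) * B :=
        (Commute.pow_right (show Commute B Q from hQB.symm) (k - i))
      have hBq' : B * (Ring.inverse Q) ^ (k - i) = (Ring.inverse Q) ^ (k - i) * B :=
        (Commute.pow_right (show Commute B (Ring.inverse Q) from comm_inv hQu hQB.symm) (k - i))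
      exact factor_id A B Z (Q ^ (k - i)) ((Ring.inverse Q) ^ (k - i))
        hAu hBu hZu hA' hB' hqq' hq'q hAq hAq' hBq hBq'
    have H := intertwine (A * Z) f g k key
    have hL : Ring.inverse Z * (Ring.inverse A * ((A * Z) * ((List.range k).map f).prod))
        = ((List.range k).map f).prod := by
      rw [mul_assoc A Z, cancel_left' hAu, cancel_left' hZu]
    rw [← hL, H]
    simp only [mul_assoc]
end
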